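/- Under the DDIM family of conditionals, the conditional expectation satisfies E[x_{t-Δt} | x_t] = (μ_{t-Δt}/μ_t) x_t + ((μ_{t-Δt}/μ_t) σ_t - γ_t) σ_t ∇ log p_t(x_t). -/

import Mathlib

/-!
Write `w(y) = f(y) φ_σ(x - μ y)` for the unnormalised posterior weight of `x₀ = y` given
`x_t = x`, so that `p(x) = ∫ w`. Since both `φ_σ` and `z ↦ ‖z‖ φ_σ(z)` are bounded, `|f|` times a
constant dominates the `x`-derivative of the integrand, and differentiating under the integral
gives `∇p(x) = -σ⁻² ∫ w(y) (x - μ y) dy`: Tweedie's formula `E[x - μ x₀ | x] = -σ² ∇ log p(x)`.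
The DDIM mean `μ_s y + (γ/σ)(x - μ y)` equals `(μ_s/μ) x + (γ/σ - μ_s/μ)(x - μ y)`, which is affine
in the noise `x - μ y`, so its posterior expectation is read off from Tweedie's formula.
-/

open MeasureTheory Real

/-- Isotropic Gaussian density on `ℝ^N` with standard deviation `σ`. -/
noncomputable def gaussPdf (N : ℕ) (σ : ℝ) (z : EuclideanSpace ℝ (Fin N)) : ℝ :=
  (2 * π * σ ^ 2) ^ (-(N : ℝ) / 2) * Real.exp (-‖z‖ ^ 2 / (2 * σ ^ 2))

theorem mul_exp_neg_sq_div_le {σ : ℝ} (hσ : 0 < σ) (t : ℝ) :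
    t * exp (-t ^ 2 / (2 * σ ^ 2)) ≤ σ := by
  have h : t ≤ σ * exp (t ^ 2 / (2 * σ ^ 2)) := calc
    t ≤ σ * (t ^ 2 / (2 * σ ^ 2) + 1) := by
      field_simp
      nlinarith [sq_nonneg (t - σ)]
    _ ≤ σ * exp (t ^ 2 / (2 * σ ^ 2)) := by gcongr; exact add_one_le_exp _
  rwa [neg_div, exp_neg, ← div_eq_mul_inv, div_le_iff₀ (exp_pos _)]

section GaussPdf

variable {N : ℕ} {σ : ℝ}

theorem gaussPdf_nonneg (z : EuclideanSpace ℝ (Fin N)) : 0 ≤ gaussPdf N σ z := by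
  unfold gaussPdf; positivity

theorem gaussPdf_le (z : EuclideanSpace ℝ (Fin N)) :
    gaussPdf N σ z ≤ (2 * π * σ ^ 2) ^ (-(N : ℝ) / 2) := by
  unfold gaussPdf
  refine mul_le_of_le_one_right (by positivity) (exp_le_one_iff.mpr ?_)
  exact div_nonpos_of_nonpos_of_nonneg (by simp) (by positivity)

theorem gaussPdf_mul_norm_le (hσ : 0 < σ) (z : EuclideanSpace ℝ (Fin N)) :
    gaussPdf N σ z * ‖z‖ ≤ (2 * π * σ ^ 2) ^ (-(N : ℝ) / 2) * σ := by
  rw [gaussPdf, mul_assoc, mul_comm (exp _)]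
  gcongr
  exact mul_exp_neg_sq_div_le hσ ‖z‖

theorem continuous_gaussPdf : Continuous (gaussPdf N σ) := by
  unfold gaussPdf; fun_prop

theorem hasGradientAt_gaussPdf (z : EuclideanSpace ℝ (Fin N)) :
    HasGradientAt (gaussPdf N σ) ((-(σ ^ 2)⁻¹ * gaussPdf N σ z) • z) z := by
  have hsq : HasFDerivAt (fun w : EuclideanSpace ℝ (Fin N) => -(2 * σ ^ 2)⁻¹ * ‖w‖ ^ 2)
      ((-(2 * σ ^ 2)⁻¹) • (2 • innerSL ℝ z)) z :=
    (hasStrictFDerivAt_norm_sq z).hasFDerivAt.const_mul _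
  have hexp := ((hasDerivAt_exp _).comp_hasFDerivAt z hsq).const_mul
    ((2 * π * σ ^ 2) ^ (-(N : ℝ) / 2))
  have hfun : gaussPdf N σ = fun w => (2 * π * σ ^ 2) ^ (-(N : ℝ) / 2) *
      exp (-(2 * σ ^ 2)⁻¹ * ‖w‖ ^ 2) := by
    ext w; simp only [gaussPdf]; ring_nf
  rw [hasGradientAt_iff_hasFDerivAt, hfun]
  refine hexp.congr_fderiv ?_
  ext v
  simp [InnerProductSpace.toDual_apply_apply]
  ring

end GaussPdf

open Metric in
theorem hasGradientAt_integral_of_dominated_of_gradient_le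
    {E : Type*} [NormedAddCommGroup E] [InnerProductSpace ℝ E] [CompleteSpace E]
    {α : Type*} [MeasurableSpace α] {ν : Measure α}
    {F : E → α → ℝ} {G : E → α → E} {x₀ : E} {bound : α → ℝ} {ε : ℝ} (ε_pos : 0 < ε)
    (hF_meas : ∀ᶠ x in nhds x₀, AEStronglyMeasurable (F x) ν) (hF_int : Integrable (F x₀) ν)
    (hG_meas : AEStronglyMeasurable (G x₀) ν)
    (h_bound : ∀ᵐ a ∂ν, ∀ x ∈ ball x₀ ε, ‖G x a‖ ≤ bound a)
    (bound_integrable : Integrable bound ν)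
    (h_diff : ∀ᵐ a ∂ν, ∀ x ∈ ball x₀ ε, HasGradientAt (F · a) (G x a) x) :
    HasGradientAt (fun x => ∫ a, F x a ∂ν) (∫ a, G x₀ a ∂ν) x₀ := by
  have hG_int : Integrable (G x₀) ν :=
    bound_integrable.mono' hG_meas (h_bound.mono fun a ha => ha x₀ (mem_ball_self ε_pos))
  have hderiv := hasFDerivAt_integral_of_dominated_of_fderiv_le (F' := fun x a => innerSL ℝ (G x a))
    (ball_mem_nhds x₀ ε_pos) hF_meas hF_int
    ((innerSL ℝ).continuous.comp_aestronglyMeasurable hG_meas)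
    (by simpa only [innerSL_apply_norm] using h_bound) bound_integrable
    (h_diff.mono fun a ha x hx => (ha x hx).hasFDerivAt)
  rw [(innerSL ℝ).integral_comp_comm hG_int] at hderiv
  exact hasGradientAt_iff_hasFDerivAt.mpr hderiv

theorem HasGradientAt.log {E : Type*} [NormedAddCommGroup E] [InnerProductSpace ℝ E]
    [CompleteSpace E] {f : E → ℝ} {g x : E} (hf : HasGradientAt f g x) (hx : f x ≠ 0) :
    HasGradientAt (fun z => Real.log (f z)) ((f x)⁻¹ • g) x := by
  rw [hasGradientAt_iff_hasFDerivAt, map_smulₛₗ]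
  exact hf.hasFDerivAt.log hx

section GaussianMixture

variable {N : ℕ} {σ : ℝ} {α : Type*} [MeasurableSpace α] {ν : Measure α} {f : α → ℝ}
  {c : α → EuclideanSpace ℝ (Fin N)}

theorem integrable_mul_gaussPdf (hf : Integrable f ν) (hc : AEStronglyMeasurable c ν)
    (x : EuclideanSpace ℝ (Fin N)) :
    Integrable (fun y => f y * gaussPdf N σ (x - c y)) ν :=
  hf.mul_bdd (continuous_gaussPdf.comp_aestronglyMeasurable (aestronglyMeasurable_const.sub hc))
    (ae_of_all _ fun y => by
      rw [norm_of_nonneg (gaussPdf_nonneg _)]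
      exact gaussPdf_le _)

theorem integrable_mul_gaussPdf_smul (hσ : 0 < σ) (hf : Integrable f ν)
    (hc : AEStronglyMeasurable c ν) (x : EuclideanSpace ℝ (Fin N)) :
    Integrable (fun y => (f y * gaussPdf N σ (x - c y)) • (x - c y)) ν := by
  have hd : AEStronglyMeasurable (fun y => x - c y) ν := aestronglyMeasurable_const.sub hc
  have hg : AEStronglyMeasurable (fun y => gaussPdf N σ (x - c y) • (x - c y)) ν :=
    (continuous_gaussPdf.comp_aestronglyMeasurable hd).smul hd
  have := hf.smul_bdd _ hg (ae_of_all _ fun y =>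
    (by rw [norm_smul, norm_of_nonneg (gaussPdf_nonneg _)]; exact gaussPdf_mul_norm_le hσ _ :
      ‖gaussPdf N σ (x - c y) • (x - c y)‖ ≤ _))
  simp only [mul_smul]
  exact this

theorem hasGradientAt_integral_mul_gaussPdf (hσ : 0 < σ) (hf : Integrable f ν)
    (hc : AEStronglyMeasurable c ν) (x : EuclideanSpace ℝ (Fin N)) :
    HasGradientAt (fun x => ∫ y, f y * gaussPdf N σ (x - c y) ∂ν)
      (-(σ ^ 2)⁻¹ • ∫ y, (f y * gaussPdf N σ (x - c y)) • (x - c y) ∂ν) x := by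
  rw [← integral_smul]
  refine hasGradientAt_integral_of_dominated_of_gradient_le
    (G := fun x y => -(σ ^ 2)⁻¹ • (f y * gaussPdf N σ (x - c y)) • (x - c y))
    (bound := fun y => (σ ^ 2)⁻¹ * ((2 * π * σ ^ 2) ^ (-(N : ℝ) / 2) * σ) * ‖f y‖) one_pos
    (Filter.Eventually.of_forall fun x => (integrable_mul_gaussPdf hf hc x).aestronglyMeasurable)
    (integrable_mul_gaussPdf hf hc x)
    ((integrable_mul_gaussPdf_smul hσ hf hc x).aestronglyMeasurable.fun_const_smul _)
    (ae_of_all _ fun y x' _ => ?_) (hf.norm.const_mul _) (ae_of_all _ fun y x' _ => ?_)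
  · rw [norm_smul, norm_smul, norm_mul, norm_neg, norm_inv, norm_of_nonneg (gaussPdf_nonneg _),
      norm_of_nonneg (sq_nonneg σ)]
    calc _ = (σ ^ 2)⁻¹ * (gaussPdf N σ (x' - c y) * ‖x' - c y‖) * ‖f y‖ := by ring
      _ ≤ _ := by gcongr (σ ^ 2)⁻¹ * ?_ * _; exact gaussPdf_mul_norm_le hσ _
  · have := ((hasGradientAt_gaussPdf (σ := σ) (x' - c y)).hasFDerivAt.comp x'
      ((hasFDerivAt_id x').sub_const (c y))).const_mul (f y)
    rw [hasGradientAt_iff_hasFDerivAt]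
    refine this.congr_fderiv ?_
    ext v
    simp [InnerProductSpace.toDual_apply_apply]
    ring

theorem tweedie_formula (hσ : 0 < σ) (hf : Integrable f ν) (hc : AEStronglyMeasurable c ν)
    (x : EuclideanSpace ℝ (Fin N)) (hx : ∫ y, f y * gaussPdf N σ (x - c y) ∂ν ≠ 0) :
    (∫ y, f y * gaussPdf N σ (x - c y) ∂ν)⁻¹ •
        ∫ y, (f y * gaussPdf N σ (x - c y)) • (x - c y) ∂ν
      = -σ ^ 2 • gradient (fun z => Real.log (∫ y, f y * gaussPdf N σ (z - c y) ∂ν)) x := by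
  rw [((hasGradientAt_integral_mul_gaussPdf hσ hf hc x).log hx).gradient, smul_comm]
  match_scalars
  field_simp

end GaussianMixture

theorem reverse_conditional_expectation_general
    (N : ℕ) (μt μs σt γ : ℝ)
    (hμt : 0 < μt) (hσt : 0 < σt)
    (f : EuclideanSpace ℝ (Fin N) → ℝ)
    (hf_prob : ∫ y, f y = 1)
    (p : EuclideanSpace ℝ (Fin N) → ℝ)
    (hp : ∀ x, p x = ∫ y, f y * gaussPdf N σt (x - μt • y))
    (x : EuclideanSpace ℝ (Fin N))
    (hpos : 0 < p x) :
    (p x)⁻¹ • ∫ y, (f y * gaussPdf N σt (x - μt • y)) •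
        (μs • y + (γ / σt) • (x - μt • y))
      = (μs / μt) • x
        + ((μs / μt * σt - γ) * σt) • gradient (fun z => Real.log (p z)) x := by
  obtain rfl : p = _ := funext hp
  beta_reduce at hpos ⊢
  have hf : Integrable f := .of_integral_ne_zero (by simp [hf_prob])
  have hc : AEStronglyMeasurable (fun y : EuclideanSpace ℝ (Fin N) => μt • y) volume :=
    (continuous_const_smul μt).aestronglyMeasurable
  set w := fun y => f y * gaussPdf N σt (x - μt • y)
  have hsplit : ∫ y, w y • (μs • y + (γ / σt) • (x - μt • y))
      = (μs / μt) • ((∫ y, w y) • x) + (γ / σt - μs / μt) • ∫ y, w y • (x - μt • y) := by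
    have hpt : ∀ y, w y • (μs • y + (γ / σt) • (x - μt • y))
        = (μs / μt) • (w y • x) + (γ / σt - μs / μt) • (w y • (x - μt • y)) := fun y => by
      simp only [smul_sub, smul_add, smul_smul]
      match_scalars <;> field_simp <;> ring
    have h₁ : Integrable (fun y => (μs / μt) • (w y • x)) :=
      ((integrable_mul_gaussPdf hf hc x).smul_const x).smul (μs / μt)
    have h₂ : Integrable (fun y => (γ / σt - μs / μt) • (w y • (x - μt • y))) :=
      (integrable_mul_gaussPdf_smul hσt hf hc x).smul (γ / σt - μs / μt)
    simp_rw [hpt]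
    rw [integral_add h₁ h₂, integral_smul, integral_smul, integral_smul_const]
  rw [hsplit, smul_add, smul_comm _ (γ / σt - μs / μt), tweedie_formula hσt hf hc x hpos.ne']
  match_scalars
  · field_simp
  · field_simp
    ring

/-- Under the DDIM family of reverse conditionals
`p(x_{t-Δt} | x_t, x_0) = N(μ_{t-Δt} x_0 + γ_t (x_t - μ_t x_0)/σ_t, λ_t² I)`
with `γ_t² + λ_t² = σ_{t-Δt}²`, the conditional expectation
`E[x_{t-Δt} | x_t = x] = ∫ E[x_{t-Δt}|x_t,x_0=y] p(y|x_t=x) dy` satisfies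
`E[x_{t-Δt} | x_t = x] = (μ_{t-Δt}/μ_t) x + ((μ_{t-Δt}/μ_t) σ_t - γ_t) σ_t ∇ log p_t(x)`. -/
theorem reverse_conditional_expectation
    (N : ℕ) (μt μs σt σs γ lam : ℝ)
    (hμt : 0 < μt) (hμs : 0 < μs) (hσt : 0 < σt) (hσs : 0 < σs)
    (hglam : γ ^ 2 + lam ^ 2 = σs ^ 2)
    (f : EuclideanSpace ℝ (Fin N) → ℝ)
    (hf_meas : Measurable f) (hf_nonneg : ∀ y, 0 ≤ f y)
    (hf_prob : ∫ y, f y = 1)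
    (p : EuclideanSpace ℝ (Fin N) → ℝ)
    (hp : ∀ x, p x = ∫ y, f y * gaussPdf N σt (x - μt • y))
    (x : EuclideanSpace ℝ (Fin N))
    (hpos : 0 < p x)
    (hint1 : Integrable (fun y => f y * gaussPdf N σt (x - μt • y)))
    (hint2 : Integrable (fun y => (f y * gaussPdf N σt (x - μt • y)) • y))
    (hdiff : DifferentiableAt ℝ p x) :
    (p x)⁻¹ • ∫ y, (f y * gaussPdf N σt (x - μt • y)) •
        (μs • y + (γ / σt) • (x - μt • y))
      = (μs / μt) • x
        + ((μs / μt * σt - γ) * σt) • gradient (fun z => Real.log (p z)) x :=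
  reverse_conditional_expectation_general N μt μs σt γ hμt hσt f hf_prob p hp x hpos
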